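/- arXiv:1611.01565 — 3 statements merged into one kernel-verified Lean document; each statement's English description precedes it below -/
import Mathlib

section
/- There exists a constant C > 0 such that for every function f in H^1 of the two-dimensional torus with mean zero, the L^4 norm of f satisfies ∫|f|^4 ≤ C (∫|f|^2)(∫|∇f|^2). -/
open MeasureTheory Filter

noncomputable section

/-- The plane `ℝ²`, used as the universal cover of the two-dimensional torus `T²`. -/
abbrev D : Type := Fin 2 → ℝ

/-- The fundamental domain of the torus `T² = ℝ²/ℤ²`. -/
abbrev Torus : Set D := Set.Icc 0 1

/-- `f` is `ℤ²`-periodic, i.e. descends to the torus. -/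
def PeriodicT {E : Type*} (f : D → E) : Prop :=
  ∀ (x : D) (k : Fin 2 → ℤ), f (x + fun i => (k i : ℝ)) = f x

/-- Partial derivative `∂_j f`. -/
def pd (j : Fin 2) (f : D → ℝ) (x : D) : ℝ := fderiv ℝ f x (Pi.single j 1)

/-- Laplacian `Δ f`. -/
def lap (f : D → ℝ) (x : D) : ℝ := ∑ j : Fin 2, pd j (pd j f) x

/-- Squared gradient `|∇u|² = ∑_{j,i} (∂_j u^i)²` of an `ℝ³`-valued map. -/
def gradSq (u : D → Fin 3 → ℝ) (x : D) : ℝ :=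
  ∑ j : Fin 2, ∑ i : Fin 3, (pd j (fun y => u y i) x) ^ 2

/-- The tension field `τ(u) = Δu + u|∇u|²`. -/
def tension (u : D → Fin 3 → ℝ) (x : D) (i : Fin 3) : ℝ :=
  lap (fun y => u y i) x + u x i * gradSq u x

/-!
Write `φ` for `f` in coordinates on the unit square `Q = [0,1]²`. The fundamental theorem of
calculus on horizontal and vertical segments gives two one-dimensional bounds. First, `φ(u,v)²` is at most
`A(u)`, the integral of `φ² + |∂₂(φ²)|` over the vertical segment through `u`, and likewise at most
`B(v)` along horizontal segments; hence `φ⁴ ≤ A(u) B(v)` and `∫φ⁴ ≤ ∫A · ∫B` (Gagliardo's trick).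
Second, `(φ x - φ y)²` is bounded by segment integrals of `|∇φ|²` along an L-shaped path, which for
mean-zero `φ` gives the Poincaré inequality `∫φ² ≤ 2∫|∇φ|²`. Expanding `∫A` and `∫B` and applying
Cauchy–Schwarz to the cross terms `∫|φ ∂ᵢφ|` then yields the inequality with `C = 8`.
-/

open Set unitInterval ProbabilityTheory
open scoped ENNReal

section General

variable {Ω : Type*} [MeasurableSpace Ω] {μ : Measure Ω}

theorem sq_integral_le_integral_sq [IsProbabilityMeasure μ] {X : Ω → ℝ} (hX : MemLp X 2 μ) :
    (∫ ω, X ω ∂μ) ^ 2 ≤ ∫ ω, X ω ^ 2 ∂μ := by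
  have := variance_nonneg X μ
  rw [variance_eq_sub hX, sub_nonneg] at this
  simpa using this

theorem sq_integral_abs_mul_le {f g : Ω → ℝ} (hf : MemLp f 2 μ) (hg : MemLp g 2 μ) :
    (∫ ω, |f ω * g ω| ∂μ) ^ 2 ≤ (∫ ω, f ω ^ 2 ∂μ) * ∫ ω, g ω ^ 2 ∂μ := by
  have hfg : Integrable (fun ω => |f ω * g ω|) μ := (hf.integrable_mul hg).abs
  have hquad : ∀ t : ℝ, 0 ≤ (∫ ω, f ω ^ 2 ∂μ) * (t * t) + (2 * ∫ ω, |f ω * g ω| ∂μ) * t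
      + ∫ ω, g ω ^ 2 ∂μ := by
    intro t
    have hexpand : ∀ ω, (t * |f ω| + |g ω|) ^ 2
        = t * t * f ω ^ 2 + 2 * t * |f ω * g ω| + g ω ^ 2 := fun ω => by
      rw [abs_mul, add_sq, mul_pow, sq_abs, sq_abs]; ring
    calc 0 ≤ ∫ ω, (t * |f ω| + |g ω|) ^ 2 ∂μ := integral_nonneg fun _ => sq_nonneg _
      _ = _ := by
        simp_rw [hexpand]
        have h₁ := hf.integrable_sq.const_mul (t * t)
        have h₂ := hfg.const_mul (2 * t)
        rw [integral_add (h₁.fun_add h₂) hg.integrable_sq, integral_add h₁ h₂,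
          integral_const_mul, integral_const_mul]
        ring
  have := discrim_le_zero hquad
  rw [discrim] at this
  linarith

theorem integral_sq_le_of_sq_sub_le [IsProbabilityMeasure μ] {φ α β : Ω → ℝ} (hφ : MemLp φ 2 μ)
    (hα : Integrable α μ) (hβ : Integrable β μ) (hmean : ∫ ω, φ ω ∂μ = 0)
    (h : ∀ᵐ p ∂μ, ∀ᵐ q ∂μ, (φ p - φ q) ^ 2 ≤ α p + β q) :
    ∫ ω, φ ω ^ 2 ∂μ ≤ (∫ ω, α ω ∂μ) + ∫ ω, β ω ∂μ := by
  have hpoint : ∀ᵐ p ∂μ, φ p ^ 2 ≤ α p + ∫ ω, β ω ∂μ := by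
    filter_upwards [h] with p hp
    have hsub : MemLp (fun q => φ p - φ q) 2 μ := (memLp_const _).sub hφ
    calc φ p ^ 2 = (∫ q, (φ p - φ q) ∂μ) ^ 2 := by
          rw [integral_sub (integrable_const _) (hφ.integrable one_le_two), hmean]; simp
      _ ≤ ∫ q, (φ p - φ q) ^ 2 ∂μ := sq_integral_le_integral_sq hsub
      _ ≤ ∫ q, (α p + β q) ∂μ := integral_mono_ae hsub.integrable_sq
          ((integrable_const _).add hβ) hp
      _ = α p + ∫ ω, β ω ∂μ := by rw [integral_add (integrable_const _) hβ]; simp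
  calc ∫ ω, φ ω ^ 2 ∂μ ≤ ∫ p, (α p + ∫ ω, β ω ∂μ) ∂μ :=
        integral_mono_ae hφ.integrable_sq (hα.add (integrable_const _)) hpoint
    _ = (∫ ω, α ω ∂μ) + ∫ ω, β ω ∂μ := by rw [integral_add hα (integrable_const _)]; simp

theorem integral_pow_four_le_of_sq_le {α β : Type*} [MeasurableSpace α] [MeasurableSpace β]
    {μ : Measure α} {ν : Measure β} [SFinite μ] [SFinite ν] {F : α × β → ℝ} {A : α → ℝ}
    {B : β → ℝ} (hA : Integrable A μ) (hB : Integrable B ν)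
    (h : ∀ᵐ p ∂μ.prod ν, F p ^ 2 ≤ A p.1 ∧ F p ^ 2 ≤ B p.2) :
    ∫ p, F p ^ 4 ∂μ.prod ν ≤ (∫ x, A x ∂μ) * ∫ y, B y ∂ν := by
  rw [← integral_prod_mul]
  refine integral_mono_of_nonneg (Eventually.of_forall fun p => by positivity) (hA.mul_prod hB) ?_
  filter_upwards [h] with p ⟨hAp, hBp⟩
  calc F p ^ 4 = F p ^ 2 * F p ^ 2 := by ring
    _ ≤ A p.1 * B p.2 := mul_le_mul hAp hBp (sq_nonneg _) ((sq_nonneg _).trans hAp)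

theorem Continuous.memLp_restrict_of_isCompact {X : Type*} [TopologicalSpace X] [T2Space X]
    [MeasurableSpace X] [OpensMeasurableSpace X] {μ : Measure X} [IsFiniteMeasureOnCompacts μ]
    {K : Set X} (hK : IsCompact K) {g : X → ℝ} (hg : Continuous g) (p : ℝ≥0∞) :
    MemLp g p (μ.restrict K) := by
  have : IsFiniteMeasure (μ.restrict K) := isFiniteMeasure_restrict.2 hK.measure_lt_top.ne
  obtain ⟨C, hC⟩ := hK.exists_bound_of_continuousOn hg.continuousOn
  exact (memLp_top_of_bound hg.aestronglyMeasurable C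
    (ae_restrict_of_forall_mem hK.measurableSet hC)).mono_exponent le_top

end General

local notation "μI" => (volume.restrict I : Measure ℝ)
local notation "μQ" => Measure.prod μI μI

instance isProbabilityMeasure_restrict_unitInterval : IsProbabilityMeasure μI :=
  ⟨by simp [Real.volume_Icc]⟩

section UnitInterval

variable {h h' : ℝ → ℝ}

theorem abs_sub_le_integral_abs_deriv (hh : ∀ t, HasDerivAt h (h' t) t) (hh' : Continuous h')
    {x y : ℝ} (hx : x ∈ I) (hy : y ∈ I) : |h x - h y| ≤ ∫ t, |h' t| ∂μI := by
  rw [← intervalIntegral.integral_eq_sub_of_hasDerivAt (fun t _ => hh t)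
    (hh'.intervalIntegrable y x)]
  calc |∫ t in y..x, h' t| ≤ ∫ t in uIoc y x, |h' t| := by
        simpa only [Real.norm_eq_abs] using
          intervalIntegral.norm_integral_le_integral_norm_uIoc (f := h') (μ := volume)
    _ ≤ ∫ t, |h' t| ∂μI :=
        setIntegral_mono_set hh'.abs.integrableOn_Icc (Eventually.of_forall fun _ => abs_nonneg _)
          (Ioc_subset_Icc_self.trans (uIcc_subset_Icc hy hx)).eventuallyLE

theorem sq_sub_le_integral_sq_deriv (hh : ∀ t, HasDerivAt h (h' t) t) (hh' : Continuous h')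
    {x y : ℝ} (hx : x ∈ I) (hy : y ∈ I) : (h x - h y) ^ 2 ≤ ∫ t, h' t ^ 2 ∂μI := by
  calc (h x - h y) ^ 2 = |h x - h y| ^ 2 := (sq_abs _).symm
    _ ≤ (∫ t, |h' t| ∂μI) ^ 2 :=
        pow_le_pow_left₀ (abs_nonneg _) (abs_sub_le_integral_abs_deriv hh hh' hx hy) 2
    _ ≤ ∫ t, |h' t| ^ 2 ∂μI :=
        sq_integral_le_integral_sq (hh'.abs.memLp_restrict_of_isCompact isCompact_Icc 2)
    _ = ∫ t, h' t ^ 2 ∂μI := by simp_rw [sq_abs]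

theorem le_integral_add_abs_deriv (hh : ∀ t, HasDerivAt h (h' t) t) (hh' : Continuous h')
    {x : ℝ} (hx : x ∈ I) : h x ≤ ∫ t, (h t + |h' t|) ∂μI := by
  have hcont : Continuous h := continuous_iff_continuousAt.2 fun t => (hh t).continuousAt
  calc h x = ∫ _t, h x ∂μI := by simp
    _ ≤ ∫ t, (h t + ∫ s, |h' s| ∂μI) ∂μI := by
        refine setIntegral_mono_on (integrableOn_const (by simp))
          (hcont.integrableOn_Icc.add (integrableOn_const (by simp))) measurableSet_Icc
          fun y hy => ?_
        linarith [le_abs_self (h x - h y), abs_sub_le_integral_abs_deriv hh hh' hx hy]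
    _ = ∫ t, (h t + |h' t|) ∂μI := by
        rw [integral_add hcont.integrableOn_Icc (integrableOn_const (by simp)),
          integral_add hcont.integrableOn_Icc hh'.abs.integrableOn_Icc]
        simp

end UnitInterval

theorem prod_restrict_unitInterval : μQ = volume.restrict (I ×ˢ I) := by
  rw [Measure.prod_restrict, Measure.volume_eq_prod]

theorem ae_mem_unitSquare : ∀ᵐ p ∂μQ, p.1 ∈ I ∧ p.2 ∈ I := by
  rw [prod_restrict_unitInterval]
  exact ae_restrict_mem (measurableSet_Icc.prod measurableSet_Icc)

theorem Continuous.memLp_unitSquare {g : ℝ × ℝ → ℝ} (hg : Continuous g) (p : ℝ≥0∞) :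
    MemLp g p μQ := by
  rw [prod_restrict_unitInterval]
  exact hg.memLp_restrict_of_isCompact (isCompact_Icc.prod isCompact_Icc) p

theorem Continuous.integrable_unitSquare {g : ℝ × ℝ → ℝ} (hg : Continuous g) :
    Integrable g μQ :=
  memLp_one_iff_integrable.1 (hg.memLp_unitSquare 1)

namespace UnitSquare

variable {φ φ₁ φ₂ : ℝ × ℝ → ℝ} (hφ : Continuous φ) (hφ₁ : Continuous φ₁) (hφ₂ : Continuous φ₂)
  (h₁ : ∀ u v, HasDerivAt (fun t => φ (t, v)) (φ₁ (u, v)) u)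
  (h₂ : ∀ u v, HasDerivAt (fun t => φ (u, t)) (φ₂ (u, v)) v)
include hφ hφ₁ hφ₂ h₁ h₂

theorem integral_sq_le_of_integral_eq_zero (hmean : ∫ p, φ p ∂μQ = 0) :
    ∫ p, φ p ^ 2 ∂μQ ≤ 2 * ((∫ p, φ₁ p ^ 2 ∂μQ) + ∫ p, φ₂ p ^ 2 ∂μQ) := by
  set a := fun v => ∫ t, φ₁ (t, v) ^ 2 ∂μI
  set b := fun u => ∫ t, φ₂ (u, t) ^ 2 ∂μI
  have ha : Integrable a μI := (hφ₁.pow 2).integrable_unitSquare.integral_prod_right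
  have hb : Integrable b μI := (hφ₂.pow 2).integrable_unitSquare.integral_prod_left
  have hsub : ∀ᵐ p ∂μQ, ∀ᵐ q ∂μQ, (φ p - φ q) ^ 2 ≤ 2 * a p.2 + 2 * b q.1 := by
    filter_upwards [ae_mem_unitSquare] with p hp
    filter_upwards [ae_mem_unitSquare] with q hq
    have e₁ : (φ (p.1, p.2) - φ (q.1, p.2)) ^ 2 ≤ a p.2 :=
      sq_sub_le_integral_sq_deriv (h₁ · p.2) (by fun_prop) hp.1 hq.1
    have e₂ : (φ (q.1, p.2) - φ (q.1, q.2)) ^ 2 ≤ b q.1 :=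
      sq_sub_le_integral_sq_deriv (h₂ q.1 ·) (by fun_prop) hp.2 hq.2
    nlinarith [sq_nonneg (φ (p.1, p.2) - 2 * φ (q.1, p.2) + φ (q.1, q.2))]
  have := integral_sq_le_of_sq_sub_le (hφ.memLp_unitSquare 2) ((ha.comp_snd μI).const_mul 2)
    ((hb.comp_fst μI).const_mul 2) hmean hsub
  rw [integral_prod_symm (fun p => φ₁ p ^ 2) (hφ₁.pow 2).integrable_unitSquare,
    integral_prod (fun p => φ₂ p ^ 2) (hφ₂.pow 2).integrable_unitSquare, mul_add]
  simpa [integral_const_mul, integral_fun_snd, integral_fun_fst] using this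

theorem integral_pow_four_le :
    ∫ p, φ p ^ 4 ∂μQ ≤
      (∫ p, (φ p ^ 2 + |2 * φ p * φ₂ p|) ∂μQ) * ∫ p, (φ p ^ 2 + |2 * φ p * φ₁ p|) ∂μQ := by
  have hg₁ : Continuous fun p => φ p ^ 2 + |2 * φ p * φ₁ p| := by fun_prop
  have hg₂ : Continuous fun p => φ p ^ 2 + |2 * φ p * φ₂ p| := by fun_prop
  rw [integral_prod _ hg₂.integrable_unitSquare, integral_prod_symm _ hg₁.integrable_unitSquare]
  refine integral_pow_four_le_of_sq_le hg₂.integrable_unitSquare.integral_prod_left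
    hg₁.integrable_unitSquare.integral_prod_right ?_
  filter_upwards [ae_mem_unitSquare] with p hp
  exact ⟨le_integral_add_abs_deriv (fun t => by simpa using (h₂ p.1 t).pow 2) (by fun_prop) hp.2,
    le_integral_add_abs_deriv (fun t => by simpa using (h₁ t p.2).pow 2) (by fun_prop) hp.1⟩

theorem integral_pow_four_le_of_integral_eq_zero (hmean : ∫ p, φ p ∂μQ = 0) :
    ∫ p, φ p ^ 4 ∂μQ ≤
      8 * (∫ p, φ p ^ 2 ∂μQ) * ((∫ p, φ₁ p ^ 2 ∂μQ) + ∫ p, φ₂ p ^ 2 ∂μQ) := by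
  have hsplit : ∀ {ψ : ℝ × ℝ → ℝ}, Continuous ψ → ∫ p, (φ p ^ 2 + |2 * φ p * ψ p|) ∂μQ
      = (∫ p, φ p ^ 2 ∂μQ) + 2 * ∫ p, |φ p * ψ p| ∂μQ := fun {ψ} hψ => by
    simp_rw [mul_assoc, abs_mul, abs_two, ← abs_mul]
    have hφ2 : Continuous fun p => φ p ^ 2 := by fun_prop
    have hφψ : Continuous fun p => 2 * |φ p * ψ p| := by fun_prop
    rw [integral_add hφ2.integrable_unitSquare hφψ.integrable_unitSquare, integral_const_mul]
  have hpoincare := integral_sq_le_of_integral_eq_zero hφ hφ₁ hφ₂ h₁ h₂ hmean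
  have hgagliardo := integral_pow_four_le hφ hφ₁ hφ₂ h₁ h₂
  rw [hsplit hφ₂, hsplit hφ₁] at hgagliardo
  have hcs₁ := sq_integral_abs_mul_le (hφ.memLp_unitSquare 2) (hφ₁.memLp_unitSquare 2)
  have hcs₂ := sq_integral_abs_mul_le (hφ.memLp_unitSquare 2) (hφ₂.memLp_unitSquare 2)
  set N := ∫ p, φ p ^ 2 ∂μQ
  set X₁ := ∫ p, |φ p * φ₁ p| ∂μQ
  set X₂ := ∫ p, |φ p * φ₂ p| ∂μQ
  have hN : 0 ≤ N := integral_nonneg fun _ => sq_nonneg _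
  refine hgagliardo.trans ?_
  -- `ab ≤ (a² + b²) / 2` and `(N + 2Xᵢ)² ≤ 2N² + 8Xᵢ²`
  nlinarith [mul_le_mul_of_nonneg_left hpoincare hN, sq_nonneg (X₁ - X₂), sq_nonneg (N - 2 * X₁),
    sq_nonneg (N - 2 * X₂)]

end UnitSquare

theorem setIntegral_torus_eq (g : D → ℝ) : ∫ x in Torus, g x = ∫ p, g ![p.1, p.2] ∂μQ := by
  have hpi : volume.restrict Torus = Measure.pi fun _ : Fin 2 => μI := by
    rw [show Torus = Set.pi univ fun _ => I from (pi_univ_Icc 0 1).symm, volume_pi,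
      Measure.restrict_pi_pi]
  rw [hpi, ← ((measurePreserving_finTwoArrow μI).symm _).integral_comp']
  rfl

theorem hasDerivAt_vecCons_fst (v t : ℝ) :
    HasDerivAt (fun s : ℝ => (![s, v] : D)) (Pi.single 0 1) t := by
  rw [hasDerivAt_pi]
  intro i
  fin_cases i
  · simpa using hasDerivAt_id' t
  · simpa using hasDerivAt_const t v

theorem hasDerivAt_vecCons_snd (u t : ℝ) :
    HasDerivAt (fun s : ℝ => (![u, s] : D)) (Pi.single 1 1) t := by
  rw [hasDerivAt_pi]
  intro i
  fin_cases i
  · simpa using hasDerivAt_const t u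
  · simpa using hasDerivAt_id' t

/-- Ladyzhenskaya's interpolation inequality on the two-dimensional torus:
`∫|f|⁴ ≤ C (∫|f|²)(∫|∇f|²)` for mean-zero `f ∈ H¹(T²)`. -/
theorem ladyzhenskaya_interpolation :
    ∃ C > (0:ℝ), ∀ f : D → ℝ, ContDiff ℝ 1 f → PeriodicT f →
      (∫ x in Torus, f x) = 0 →
      (∫ x in Torus, (f x) ^ 4) ≤
        C * (∫ x in Torus, (f x) ^ 2) * (∫ x in Torus, ∑ j : Fin 2, (pd j f x) ^ 2) := by
  refine ⟨8, by norm_num, fun f hf _ hmean => ?_⟩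
  have hvec : Continuous fun p : ℝ × ℝ => (![p.1, p.2] : D) := by fun_prop
  have hpd (j : Fin 2) : Continuous fun p : ℝ × ℝ => pd j f ![p.1, p.2] :=
    ((hf.continuous_fderiv one_ne_zero).clm_apply continuous_const).comp hvec
  have hderiv (x : D) := (hf.differentiable one_ne_zero x).hasFDerivAt
  rw [setIntegral_torus_eq] at hmean
  have hgrad : ∫ p, ∑ j : Fin 2, pd j f ![p.1, p.2] ^ 2 ∂μQ
      = (∫ p, pd 0 f ![p.1, p.2] ^ 2 ∂μQ) + ∫ p, pd 1 f ![p.1, p.2] ^ 2 ∂μQ := by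
    simp only [Fin.sum_univ_two]
    exact integral_add ((hpd 0).pow 2).integrable_unitSquare ((hpd 1).pow 2).integrable_unitSquare
  rw [setIntegral_torus_eq, setIntegral_torus_eq, setIntegral_torus_eq, hgrad]
  exact UnitSquare.integral_pow_four_le_of_integral_eq_zero
    (hf.continuous.comp hvec) (hpd 0) (hpd 1)
    (fun u v => (hderiv _).comp_hasDerivAt u (hasDerivAt_vecCons_fst v u))
    (fun u v => (hderiv _).comp_hasDerivAt v (hasDerivAt_vecCons_snd u v)) hmean
end
end

section
/- Fix T > 0 and let G : [0,T] → [0,∞) be continuous, ε₁ : Δ_T → [0,∞) be superadditive (a control), ε₂ : Δ_T → R be superadditive, and κ > 0. Suppose for all 0 ≤ s ≤ t ≤ T: G_t − G_s ≤ (sup_{r∈[s,t]} G_r) ε₁(s,t)^{1/κ} + ε₂(s,t). Then there is a constant C_κ > 0 depending only on κ such that sup_{t≤T} G_t ≤ 2 exp(max{1, C_κ ε₁(0,T)}) [G_0 + sup_{t≤T} |ε₂(0,t)|]. -/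
/-!
Put `E = sup_{t ≤ T} |ε₂(0,t)|`; superadditivity gives `ε₂(s,u) ≤ ε₂(0,u) - ε₂(0,s) ≤ 2E`.
(`E` is a genuine supremum: the hypothesis, together with the boundedness of `G`, bounds `ε₂`
from below, and superadditivity then bounds `ε₂(0,·)` from above.)
If `ε₁(s,u) ≤ 2^{-κ}` and `u` maximises `G` on `[s,u]`, the hypothesis reads
`G_u - G_s ≤ G_u / 2 + 2E`, i.e. `G_u ≤ 2 G_s + 4E`.

Now let `w` maximise `G` on `[0,u]` and let `σ` be the infimum of the `s ≤ w` with
`ε₁(s,w) ≤ 2^{-κ}`. By continuity of `G` at `σ`, `G_w ≤ 2 G_σ + 4E`, while every `s < σ` has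
`ε₁(0,s) ≤ ε₁(0,w) - 2^{-κ}`. So each quantum `2^{-κ}` of `ε₁(0,·)` at most doubles the bound,
and induction on `k = ⌊2^κ ε₁(0,T)⌋ + 1` gives `G ≤ 2^k G_0 + 4(2^k - 1)E`, which is at most
`2 exp(max{1, C ε₁(0,T)}) (G_0 + E)` for `C = 2^κ log 8`.
-/

open Set Real

def SuperadditiveOn (T : ℝ) (ε : ℝ → ℝ → ℝ) : Prop :=
  ∀ s r t, 0 ≤ s → s ≤ r → r ≤ t → t ≤ T → ε s r + ε r t ≤ ε s t

namespace SuperadditiveOn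

variable {T s t u : ℝ} {ε : ℝ → ℝ → ℝ}

lemma apply_self_nonpos (h : SuperadditiveOn T ε) (ht : 0 ≤ t) (htT : t ≤ T) : ε t t ≤ 0 := by
  linarith [h t t t ht le_rfl le_rfl htT]

lemma le_sub_apply_zero (h : SuperadditiveOn T ε) (hs : 0 ≤ s) (hsu : s ≤ u) (hu : u ≤ T) :
    ε s u ≤ ε 0 u - ε 0 s := by
  linarith [h 0 s u le_rfl hs hsu hu]

lemma mono (h : SuperadditiveOn T ε) (h₀ : ∀ s t, 0 ≤ s → s ≤ t → t ≤ T → 0 ≤ ε s t)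
    {s' t' : ℝ} (hs' : 0 ≤ s') (hs : s' ≤ s) (hst : s ≤ t) (ht : t ≤ t') (ht' : t' ≤ T) :
    ε s t ≤ ε s' t' := by
  have hs_le := h s' s t' hs' hs (hst.trans ht) ht'
  have ht_le := h s t t' (hs'.trans hs) hst ht ht'
  linarith [h₀ s' s hs' hs ((hst.trans ht).trans ht'), h₀ t t' ((hs'.trans hs).trans hst) ht ht']

lemma abs_apply_zero_le (h : SuperadditiveOn T ε) {K : ℝ}
    (hK : ∀ s t, 0 ≤ s → s ≤ t → t ≤ T → -K ≤ ε s t) (ht : t ∈ Icc 0 T) :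
    |ε 0 t| ≤ |ε 0 T| + K := by
  have hsplit := h 0 t T le_rfl ht.1 ht.2 le_rfl
  have h0t := hK 0 t le_rfl ht.1 ht.2
  have htT := hK t T ht.1 ht.2 le_rfl
  rw [abs_le]
  constructor <;> linarith [le_abs_self (ε 0 T), abs_nonneg (ε 0 T)]

lemma le_two_mul_of_abs_apply_zero_le (h : SuperadditiveOn T ε) {E : ℝ}
    (hE : ∀ r ∈ Icc 0 T, |ε 0 r| ≤ E) (hs : 0 ≤ s) (hsu : s ≤ u) (hu : u ≤ T) :
    ε s u ≤ 2 * E := by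
  linarith [h.le_sub_apply_zero hs hsu hu, (abs_le.1 (hE u ⟨hs.trans hsu, hu⟩)).2,
    (abs_le.1 (hE s ⟨hs, hsu.trans hu⟩)).1]

end SuperadditiveOn

lemma rpow_one_div_le_half {κ x : ℝ} (hκ : 0 < κ) (hx : 0 ≤ x) (hxκ : x ≤ 2 ^ (-κ)) :
    x ^ (1 / κ) ≤ 1 / 2 :=
  calc x ^ (1 / κ) ≤ ((2 : ℝ) ^ (-κ)) ^ (1 / κ) := rpow_le_rpow hx hxκ (by positivity)
    _ = 1 / 2 := by
      rw [← rpow_mul zero_le_two, neg_mul, mul_one_div_cancel hκ.ne', rpow_neg_one, one_div]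

lemma four_mul_two_pow_succ_sub_one_le {n : ℕ} {x : ℝ} (hn : n * log 8 ≤ x) :
    4 * ((2 : ℝ) ^ (n + 1) - 1) ≤ 2 * exp (max 1 x) := by
  rcases n.eq_zero_or_pos with rfl | hn0
  · norm_num
    linarith [add_one_le_exp 1, exp_le_exp.2 (le_max_left 1 x)]
  · have h8 : (8 : ℝ) ^ n ≤ exp (max 1 x) := by
      rw [← exp_log (by norm_num : (0 : ℝ) < 8), ← exp_nat_mul]
      exact exp_le_exp.2 (hn.trans (le_max_right _ _))
    have h28 : (2 : ℝ) ^ (n + 2) ≤ 8 ^ n := by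
      rw [show (8 : ℝ) = 2 ^ 3 by norm_num, ← pow_mul]
      exact pow_le_pow_right₀ one_le_two (by omega)
    rw [pow_succ] at h28
    linarith

section Doubling

variable {T α b c : ℝ} {G : ℝ → ℝ} {ε : ℝ → ℝ → ℝ}

lemma le_two_mul_add_of_isMaxOn (hGc : ContinuousOn G (Icc 0 T)) (hε : SuperadditiveOn T ε)
    (hα : 0 ≤ α)
    (hstep : ∀ s u, 0 ≤ s → s ≤ u → u ≤ T → ε s u ≤ α → IsMaxOn G (Icc s u) u →
      G u ≤ 2 * G s + c)
    {w : ℝ} (hw : w ∈ Icc 0 T) (hmax : IsMaxOn G (Icc 0 w) w) (hG0 : G 0 ≤ b)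
    (hfar : ∀ s ∈ Icc 0 w, α < ε s w → G s ≤ b) :
    G w ≤ 2 * b + c := by
  set S := {s ∈ Icc 0 w | ε s w ≤ α}
  have hwS : w ∈ S := ⟨⟨hw.1, le_rfl⟩, (hε.apply_self_nonpos hw.1 hw.2).trans hα⟩
  have hSbdd : BddBelow S := ⟨0, fun s hs => hs.1.1⟩
  have hσS : sInf S ∈ closure S := csInf_mem_closure ⟨w, hwS⟩ hSbdd
  have hSw : closure S ⊆ Icc 0 w := isClosed_Icc.closure_subset_iff.2 (sep_subset _ _)
  have hwT : Icc 0 w ⊆ Icc 0 T := Icc_subset_Icc_right hw.2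
  have hGσ_lower : G w ≤ 2 * G (sInf S) + c := by
    have hnear : ∀ s ∈ S, (G w - c) / 2 ≤ G s := fun s hs => by
      have := hstep s w hs.1.1 hs.1.2 hw.2 hs.2 (hmax.on_subset (Icc_subset_Icc_left hs.1.1))
      linarith
    have := le_on_closure hnear continuousOn_const (hGc.mono (hSw.trans hwT)) hσS
    linarith
  have hGσ_upper : G (sInf S) ≤ b := by
    rcases (hSw hσS).1.eq_or_lt with hσ0 | hσpos
    · rwa [← hσ0]
    · have hbefore : ∀ s ∈ Ico 0 (sInf S), G s ≤ b := fun s hs => by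
        have hsw : s ∈ Icc 0 w := ⟨hs.1, hs.2.le.trans (hSw hσS).2⟩
        exact hfar s hsw (not_le.1 fun hsα => notMem_of_lt_csInf hs.2 hSbdd ⟨hsw, hsα⟩)
      have hσ : sInf S ∈ closure (Ico 0 (sInf S)) := by
        rw [closure_Ico hσpos.ne]
        exact right_mem_Icc.2 hσpos.le
      refine le_on_closure hbefore (hGc.mono ?_) continuousOn_const hσ
      rw [closure_Ico hσpos.ne]
      exact (Icc_subset_Icc_right (hSw hσS).2).trans hwT
  linarith

lemma le_two_pow_mul_add (hGc : ContinuousOn G (Icc 0 T)) (hG0 : 0 ≤ G 0) (hc : 0 ≤ c)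
    (hε₀ : ∀ s t, 0 ≤ s → s ≤ t → t ≤ T → 0 ≤ ε s t) (hε : SuperadditiveOn T ε) (hα : 0 ≤ α)
    (hstep : ∀ s u, 0 ≤ s → s ≤ u → u ≤ T → ε s u ≤ α → IsMaxOn G (Icc s u) u →
      G u ≤ 2 * G s + c) (k : ℕ) :
    ∀ u ≤ T, ε 0 u < k * α → ∀ x ∈ Icc 0 u, G x ≤ 2 ^ k * G 0 + (2 ^ k - 1) * c := by
  induction k with
  | zero =>
    intro u hu hlt x hx
    rw [Nat.cast_zero, zero_mul] at hlt
    linarith [hε₀ 0 u le_rfl (hx.1.trans hx.2) hu]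
  | succ k ih =>
    intro u hu hlt x hx
    obtain ⟨w, hw, hmax⟩ := isCompact_Icc.exists_isMaxOn (nonempty_Icc.2 (hx.1.trans hx.2))
      (hGc.mono (Icc_subset_Icc_right hu))
    have hfar : ∀ s ∈ Icc 0 w, α < ε s w → G s ≤ 2 ^ k * G 0 + (2 ^ k - 1) * c := by
      intro s hs hsw
      have hsplit := hε 0 s w le_rfl hs.1 hs.2 (hw.2.trans hu)
      have hwu := hε.mono hε₀ le_rfl le_rfl hw.1 hw.2 hu
      push_cast at hlt
      exact ih s (hs.2.trans (hw.2.trans hu)) (by linarith) s ⟨hs.1, le_rfl⟩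
    have hG0b : G 0 ≤ 2 ^ k * G 0 + (2 ^ k - 1) * c := by
      have : (1 : ℝ) ≤ 2 ^ k := one_le_pow₀ one_le_two
      nlinarith
    calc G x ≤ G w := hmax hx
      _ ≤ 2 * (2 ^ k * G 0 + (2 ^ k - 1) * c) + c :=
        le_two_mul_add_of_isMaxOn hGc hε hα hstep ⟨hw.1, hw.2.trans hu⟩
          (hmax.on_subset (Icc_subset_Icc_right hw.2)) hG0b hfar
      _ = 2 ^ (k + 1) * G 0 + (2 ^ (k + 1) - 1) * c := by ring

end Doubling

def IncrementBound (T κ : ℝ) (G : ℝ → ℝ) (ε₁ ε₂ : ℝ → ℝ → ℝ) : Prop :=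
  ∀ s t, 0 ≤ s → s ≤ t → t ≤ T → G t - G s ≤ sSup (G '' Icc s t) * ε₁ s t ^ (1 / κ) + ε₂ s t

namespace IncrementBound

variable {T κ s u : ℝ} {G : ℝ → ℝ} {ε₁ ε₂ : ℝ → ℝ → ℝ}

lemma exists_neg_le (h : IncrementBound T κ G ε₁ ε₂) (hκ : 0 < κ)
    (hGc : ContinuousOn G (Icc 0 T)) (hG : ∀ t ∈ Icc 0 T, 0 ≤ G t)
    (hε₁₀ : ∀ s t, 0 ≤ s → s ≤ t → t ≤ T → 0 ≤ ε₁ s t) (hε₁ : SuperadditiveOn T ε₁) :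
    ∃ K, ∀ s u, 0 ≤ s → s ≤ u → u ≤ T → -K ≤ ε₂ s u := by
  have hbdd := isCompact_Icc.bddAbove_image hGc
  set M := sSup (G '' Icc 0 T)
  refine ⟨M + M * ε₁ 0 T ^ (1 / κ), fun s u hs hsu hu => ?_⟩
  have hGs : G s ≤ M := le_csSup hbdd (mem_image_of_mem G ⟨hs, hsu.trans hu⟩)
  have hGu : 0 ≤ G u := hG u ⟨hs.trans hsu, hu⟩
  have hsup : sSup (G '' Icc s u) ≤ M :=
    csSup_le_csSup hbdd ((nonempty_Icc.2 hsu).image G) (image_mono (Icc_subset_Icc hs hu))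
  have hpow : ε₁ s u ^ (1 / κ) ≤ ε₁ 0 T ^ (1 / κ) :=
    rpow_le_rpow (hε₁₀ s u hs hsu hu) (hε₁.mono hε₁₀ le_rfl hs hsu hu le_rfl) (by positivity)
  have hprod : sSup (G '' Icc s u) * ε₁ s u ^ (1 / κ) ≤ M * ε₁ 0 T ^ (1 / κ) :=
    mul_le_mul hsup hpow (rpow_nonneg (hε₁₀ s u hs hsu hu) _)
      (hGu.trans (le_csSup hbdd (mem_image_of_mem G ⟨hs.trans hsu, hu⟩)))
  linarith [h s u hs hsu hu]

lemma bddAbove_abs_apply_zero (h : IncrementBound T κ G ε₁ ε₂) (hκ : 0 < κ)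
    (hGc : ContinuousOn G (Icc 0 T)) (hG : ∀ t ∈ Icc 0 T, 0 ≤ G t)
    (hε₁₀ : ∀ s t, 0 ≤ s → s ≤ t → t ≤ T → 0 ≤ ε₁ s t) (hε₁ : SuperadditiveOn T ε₁)
    (hε₂ : SuperadditiveOn T ε₂) :
    BddAbove ((fun r => |ε₂ 0 r|) '' Icc 0 T) := by
  obtain ⟨K, hK⟩ := h.exists_neg_le hκ hGc hG hε₁₀ hε₁
  exact ⟨_, forall_mem_image.2 fun _ hr => hε₂.abs_apply_zero_le hK hr⟩

lemma le_two_mul_add (h : IncrementBound T κ G ε₁ ε₂) (hκ : 0 < κ)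
    (hG : ∀ t ∈ Icc 0 T, 0 ≤ G t) (hε₁₀ : ∀ s t, 0 ≤ s → s ≤ t → t ≤ T → 0 ≤ ε₁ s t)
    {B : ℝ} (hs : 0 ≤ s) (hsu : s ≤ u) (hu : u ≤ T) (hsmall : ε₁ s u ≤ 2 ^ (-κ))
    (hmax : IsMaxOn G (Icc s u) u) (hB : ε₂ s u ≤ B) :
    G u ≤ 2 * G s + 2 * B := by
  have hsup : sSup (G '' Icc s u) ≤ G u :=
    csSup_le ((nonempty_Icc.2 hsu).image G) (forall_mem_image.2 fun _ hr => hmax hr)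
  have hhalf := rpow_one_div_le_half hκ (hε₁₀ s u hs hsu hu) hsmall
  have hprod : sSup (G '' Icc s u) * ε₁ s u ^ (1 / κ) ≤ G u * (1 / 2) :=
    mul_le_mul hsup hhalf (rpow_nonneg (hε₁₀ s u hs hsu hu) _) (hG u ⟨hs.trans hsu, hu⟩)
  linarith [h s u hs hsu hu]

end IncrementBound

/-- Rough Grönwall lemma: if `G_t − G_s ≤ (sup_{[s,t]} G) ε₁(s,t)^{1/κ} + ε₂(s,t)` for
superadditive `ε₁ ≥ 0` (a control) and superadditive `ε₂`, then
`sup_{t ≤ T} G_t ≤ 2 exp(max{1, C_κ ε₁(0,T)}) [G_0 + sup_{t ≤ T}|ε₂(0,t)|]`. -/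
theorem rough_gronwall (κ : ℝ) (hκ : 0 < κ) :
    ∃ C > (0:ℝ), ∀ (T : ℝ), 0 < T → ∀ (G : ℝ → ℝ) (ε₁ ε₂ : ℝ → ℝ → ℝ),
      ContinuousOn G (Set.Icc 0 T) →
      (∀ t ∈ Set.Icc (0:ℝ) T, 0 ≤ G t) →
      (∀ s t : ℝ, 0 ≤ s → s ≤ t → t ≤ T → 0 ≤ ε₁ s t) →
      (∀ s r t : ℝ, 0 ≤ s → s ≤ r → r ≤ t → t ≤ T → ε₁ s r + ε₁ r t ≤ ε₁ s t) →
      (∀ s r t : ℝ, 0 ≤ s → s ≤ r → r ≤ t → t ≤ T → ε₂ s r + ε₂ r t ≤ ε₂ s t) →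
      (∀ s t : ℝ, 0 ≤ s → s ≤ t → t ≤ T →
        G t - G s ≤ (sSup (G '' Set.Icc s t)) * (ε₁ s t) ^ (1/κ) + ε₂ s t) →
      ∀ t ∈ Set.Icc (0:ℝ) T,
        G t ≤ 2 * Real.exp (max 1 (C * ε₁ 0 T)) *
          (G 0 + sSup ((fun r => |ε₂ 0 r|) '' Set.Icc 0 T)) := by
  refine ⟨2 ^ κ * log 8, by positivity, fun T _ G ε₁ ε₂ hGc hG hε₁₀ hε₁ hε₂ hinc t ht => ?_⟩
  have hT : (0 : ℝ) ∈ Icc 0 T := ⟨le_rfl, ht.1.trans ht.2⟩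
  set E := sSup ((fun r => |ε₂ 0 r|) '' Icc 0 T)
  have hE : ∀ r ∈ Icc 0 T, |ε₂ 0 r| ≤ E := fun r hr =>
    le_csSup (IncrementBound.bddAbove_abs_apply_zero hinc hκ hGc hG hε₁₀ hε₁ hε₂)
      (mem_image_of_mem _ hr)
  have hE0 : 0 ≤ E := (abs_nonneg _).trans (hE 0 hT)
  have hstep : ∀ s u, 0 ≤ s → s ≤ u → u ≤ T → ε₁ s u ≤ 2 ^ (-κ) → IsMaxOn G (Icc s u) u →
      G u ≤ 2 * G s + 2 * (2 * E) := fun s u hs hsu hu hsmall hmax =>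
    IncrementBound.le_two_mul_add hinc hκ hG hε₁₀ hs hsu hu hsmall hmax
      (SuperadditiveOn.le_two_mul_of_abs_apply_zero_le hε₂ hE hs hsu hu)
  set n := ⌊2 ^ κ * ε₁ 0 T⌋₊
  have hquanta : ε₁ 0 T < ((n + 1 : ℕ) : ℝ) * 2 ^ (-κ) := by
    rw [rpow_neg zero_le_two, ← div_eq_mul_inv, lt_div_iff₀ (by positivity), mul_comm]
    exact_mod_cast Nat.lt_floor_add_one _
  have hn : n * log 8 ≤ 2 ^ κ * log 8 * ε₁ 0 T := by
    have hfloor : (n : ℝ) ≤ 2 ^ κ * ε₁ 0 T :=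
      Nat.floor_le (mul_nonneg (by positivity) (hε₁₀ 0 T le_rfl hT.2 le_rfl))
    nlinarith [log_pos (by norm_num : (1 : ℝ) < 8)]
  have hGt := le_two_pow_mul_add hGc (hG 0 hT) (by linarith) hε₁₀ hε₁ (by positivity) hstep
    (n + 1) T le_rfl hquanta t ht
  calc G t ≤ 4 * ((2 : ℝ) ^ (n + 1) - 1) * (G 0 + E) := by
        have : (2 : ℝ) ≤ 2 ^ (n + 1) := le_self_pow₀ one_le_two n.succ_ne_zero
        nlinarith [hG 0 hT]
    _ ≤ 2 * exp (max 1 (2 ^ κ * log 8 * ε₁ 0 T)) * (G 0 + E) :=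
      mul_le_mul_of_nonneg_right (four_mul_two_pow_succ_sub_one_le hn) (by linarith [hG 0 hT])
end

section
/- Let ρ > 0, x₀ ∈ T^2, and η ∈ C^∞(T^2; R) with support in B(x₀, ρ) and |∇η|_{L^∞} ≤ C/ρ. Let u ∈ H^2(T^2; R^3) with |u| = 1 a.e. and τ := Δu + u|∇u|^2. Then ⟨η²∇u, ∇τ⟩ ≤ −|ητ|²_{L²} + |ητ|²_{L²} + (C'/ρ²)|∇u|²_{L²}, i.e. ⟨η²∇u, ∇τ⟩_{L²} ≤ (C'/ρ²)|∇u|²_{L²}, where ⟨η²∇u, ∇τ⟩ = −⟨2η∇η·∇u + η²Δu, τ⟩ after integration by parts, and C' depends only on C. -/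
open MeasureTheory Filter

noncomputable section

lemma pd_contDiff {f : D → ℝ} (hf : ContDiff ℝ (⊤ : ℕ∞) f) (j : Fin 2) : ContDiff ℝ (⊤ : ℕ∞) (pd j f) :=
  (hf.fderiv_right (by simp)).clm_apply contDiff_const

lemma integral_pd_eq_zero {F : D → ℝ} (hF : ContDiff ℝ (⊤ : ℕ∞) F) (hp : PeriodicT F) (j : Fin 2) :
    ∫ x in Torus, pd j F x = 0 := by
  have hle : (0 : Fin 2 → ℝ) ≤ 1 := fun i => zero_le_one
  have hdiff : Differentiable ℝ F := hF.differentiable (by simp)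
  have hcont : Continuous (pd j F) := (pd_contDiff hF j).continuous
  have hsum : ∀ x : D, (∑ i : Fin 2, (if i = j then fderiv ℝ F x else 0) (Pi.single i 1))
      = pd j F x := by
    intro x
    rw [Finset.sum_eq_single j]
    · simp [pd]
    · intro b _ hb; simp [hb]
    · simp
  have key := MeasureTheory.integral_divergence_of_hasFDerivAt_off_countable'
    (n := 1) (0 : Fin 2 → ℝ) 1 hle
    (fun i x => if i = j then F x else 0)
    (fun i x => if i = j then fderiv ℝ F x else 0)
    ∅ Set.countable_empty
    (fun i => by
      by_cases h : i = j <;> simp only [h, if_true, if_false]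
      exacts [hF.continuous.continuousOn, continuousOn_const])
    (fun x _ i => by
      by_cases h : i = j <;> simp only [h, if_true, if_false]
      exacts [(hdiff x).hasFDerivAt, hasFDerivAt_const 0 x])
    (by
      refine (integrableOn_congr_fun (fun x _ => hsum x) measurableSet_Icc).mpr ?_
      exact hcont.continuousOn.integrableOn_compact isCompact_Icc)
  rw [setIntegral_congr_fun measurableSet_Icc (fun x _ => (hsum x).symm)] at *
  rw [key]
  refine Finset.sum_eq_zero fun i _ => ?_
  by_cases h : i = j
  · subst h
    have hbf : ∀ x : Fin 1 → ℝ, F (i.insertNth ((1 : Fin 2 → ℝ) i) x)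
        = F (i.insertNth ((0 : Fin 2 → ℝ) i) x) := by
      intro x
      have := hp (i.insertNth 0 x) (Pi.single i 1)
      simp only [Pi.one_apply, Pi.zero_apply]
      rw [← this]
      congr 1
      funext y
      refine Fin.succAboveCases i ?_ ?_ y
      · simp
      · intro m
        simp [Fin.insertNth_apply_succAbove, Pi.single_eq_of_ne (Fin.succAbove_ne i m)]
    simp only [if_pos rfl, if_true]
    rw [setIntegral_congr_fun measurableSet_Icc (fun x _ => hbf x), sub_self]
  · simp [h]

lemma pd_mul {f g : D → ℝ} (hf : ContDiff ℝ (⊤ : ℕ∞) f) (hg : ContDiff ℝ (⊤ : ℕ∞) g) (j : Fin 2) (x : D) :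
    pd j (fun y => f y * g y) x = pd j f x * g x + f x * pd j g x := by
  unfold pd
  rw [fderiv_fun_mul ((hf.differentiable (by simp)) x) ((hg.differentiable (by simp)) x)]
  simp; ring

lemma pd_sum {ι : Type*} (s : Finset ι) (f : ι → D → ℝ) (hf : ∀ i ∈ s, ContDiff ℝ (⊤ : ℕ∞) (f i))
    (j : Fin 2) (x : D) :
    pd j (fun y => ∑ i ∈ s, f i y) x = ∑ i ∈ s, pd j (f i) x := by
  unfold pd
  rw [fderiv_fun_sum (fun i hi => ((hf i hi).differentiable (by simp)) x)]
  simp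

lemma pd_const (c : ℝ) (j : Fin 2) (x : D) : pd j (fun _ => c) x = 0 := by
  unfold pd; simp

lemma PeriodicT.pd_per {f : D → ℝ} (hf : PeriodicT f) (hd : ContDiff ℝ (⊤ : ℕ∞) f) (j : Fin 2) :
    PeriodicT (pd j f) := by
  intro x k
  set c : D := fun i => (k i : ℝ) with hc
  have h0 : (fun y => f (y + c)) = f := funext fun y => hf y k
  have h1 : HasFDerivAt (fun y => f (y + c)) (fderiv ℝ f (x + c)) x := by
    have h2 : HasFDerivAt (fun y : D => y + c) (ContinuousLinearMap.id ℝ D) x :=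
      (hasFDerivAt_id x).add_const c
    simpa [Function.comp_def] using ((hd.differentiable (by simp) (x + c)).hasFDerivAt).comp x h2
  rw [h0] at h1
  show pd j f (x + c) = pd j f x
  unfold pd
  rw [← h1.fderiv]

section U
variable {u : D → Fin 3 → ℝ}

lemma ui_contDiff (hu : ContDiff ℝ (⊤ : ℕ∞) u) (i : Fin 3) : ContDiff ℝ (⊤ : ℕ∞) (fun y => u y i) :=
  contDiff_pi.mp hu i

lemma gradSq_contDiff (hu : ContDiff ℝ (⊤ : ℕ∞) u) : ContDiff ℝ (⊤ : ℕ∞) (gradSq u) := by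
  unfold gradSq
  refine ContDiff.sum fun j _ => ContDiff.sum fun i _ => ?_
  exact (pd_contDiff (ui_contDiff hu i) j).pow 2

lemma lap_contDiff {f : D → ℝ} (hf : ContDiff ℝ (⊤ : ℕ∞) f) : ContDiff ℝ (⊤ : ℕ∞) (lap f) := by
  unfold lap
  exact ContDiff.sum fun j _ => pd_contDiff (pd_contDiff hf j) j

lemma tension_contDiff (hu : ContDiff ℝ (⊤ : ℕ∞) u) (i : Fin 3) :
    ContDiff ℝ (⊤ : ℕ∞) (fun y => tension u y i) := by
  unfold tension
  exact (lap_contDiff (ui_contDiff hu i)).add ((ui_contDiff hu i).mul (gradSq_contDiff hu))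

lemma ui_per (hup : PeriodicT u) (i : Fin 3) : PeriodicT (fun y => u y i) :=
  fun x k => congrFun (hup x k) i

lemma gradSq_per (hu : ContDiff ℝ (⊤ : ℕ∞) u) (hup : PeriodicT u) : PeriodicT (gradSq u) := by
  intro x k
  unfold gradSq
  exact Finset.sum_congr rfl fun j _ => Finset.sum_congr rfl fun i _ => by
    rw [(ui_per hup i).pd_per (ui_contDiff hu i) j x k]

lemma lap_per {f : D → ℝ} (hf : ContDiff ℝ (⊤ : ℕ∞) f) (hfp : PeriodicT f) : PeriodicT (lap f) := by
  intro x k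
  unfold lap
  exact Finset.sum_congr rfl fun j _ => by
    rw [(hfp.pd_per hf j).pd_per (pd_contDiff hf j) j x k]

lemma tension_per (hu : ContDiff ℝ (⊤ : ℕ∞) u) (hup : PeriodicT u) (i : Fin 3) :
    PeriodicT (fun y => tension u y i) := by
  intro x k
  show tension u (x + fun i => (k i : ℝ)) i = tension u x i
  unfold tension
  rw [lap_per (ui_contDiff hu i) (ui_per hup i) x k, gradSq_per hu hup x k,
    show u (x + fun i => (k i : ℝ)) i = u x i from ui_per hup i x k]

variable (hu : ContDiff ℝ (⊤ : ℕ∞) u) (hs : ∀ x : D, ∑ i : Fin 3, (u x i) ^ 2 = 1)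

include hu hs

lemma sum_u_pd (j : Fin 2) (x : D) : ∑ i : Fin 3, u x i * pd j (fun y => u y i) x = 0 := by
  have hsq : ∀ i : Fin 3, (fun y => (u y i)^2) = fun y => (u y i) * (u y i) := by
    intro i; funext y; ring
  have h0 : (fun x => ∑ i : Fin 3, (u x i)^2) = fun _ => (1:ℝ) := funext hs
  have h1 : pd j (fun x => ∑ i : Fin 3, (u x i)^2) x = 0 := by rw [h0]; exact pd_const 1 j x
  rw [pd_sum _ _ (fun i _ => by rw [hsq i]; exact (ui_contDiff hu i).mul (ui_contDiff hu i))] at h1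
  have h2 : ∀ i : Fin 3, pd j (fun y => (u y i)^2) x
      = 2 * (u x i * pd j (fun y => u y i) x) := by
    intro i
    rw [hsq i, pd_mul (ui_contDiff hu i) (ui_contDiff hu i)]
    ring
  simp only [h2, ← Finset.mul_sum] at h1
  linarith

lemma sum_u_lap (x : D) :
    ∑ i : Fin 3, u x i * lap (fun y => u y i) x = - gradSq u x := by
  have key : ∀ j : Fin 2, ∑ i : Fin 3,
      (pd j (fun y => u y i) x ^ 2 + u x i * pd j (pd j (fun y => u y i)) x) = 0 := by
    intro j
    have h0 : (fun x => ∑ i : Fin 3, u x i * pd j (fun y => u y i) x) = fun _ => (0:ℝ) :=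
      funext (sum_u_pd hu hs j)
    have h1 : pd j (fun x => ∑ i : Fin 3, u x i * pd j (fun y => u y i) x) x = 0 := by
      rw [h0]; exact pd_const 0 j x
    rw [pd_sum _ _ (fun i _ => (ui_contDiff hu i).mul
      (pd_contDiff (ui_contDiff hu i) j))] at h1
    have h2 : ∀ i : Fin 3, pd j (fun y => u y i * pd j (fun y' => u y' i) y) x
        = pd j (fun y => u y i) x ^ 2 + u x i * pd j (pd j (fun y => u y i)) x := by
      intro i
      rw [pd_mul (ui_contDiff hu i) (pd_contDiff (ui_contDiff hu i) j)]
      ring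
    simp only [h2] at h1
    exact h1
  have hsumj : ∑ j : Fin 2, ∑ i : Fin 3,
      (pd j (fun y => u y i) x ^ 2 + u x i * pd j (pd j (fun y => u y i)) x) = 0 :=
    Finset.sum_eq_zero fun j _ => key j
  simp only [Finset.sum_add_distrib] at hsumj
  unfold gradSq lap
  have e1 : ∑ i : Fin 3, u x i * ∑ j : Fin 2, pd j (pd j (fun y => u y i)) x
      = ∑ j : Fin 2, ∑ i : Fin 3, u x i * pd j (pd j (fun y => u y i)) x := by
    rw [Finset.sum_comm]
    exact Finset.sum_congr rfl fun i _ => Finset.mul_sum _ _ _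
  linarith



lemma sum_u_tension (x : D) : ∑ i : Fin 3, u x i * tension u x i = 0 := by
  unfold tension
  simp only [mul_add]
  rw [Finset.sum_add_distrib]
  have h1 := sum_u_lap hu hs x
  have h2 : ∑ i : Fin 3, u x i * (u x i * gradSq u x) = gradSq u x := by
    have e : ∑ i : Fin 3, u x i * (u x i * gradSq u x)
        = (∑ i : Fin 3, (u x i)^2) * gradSq u x := by
      rw [Finset.sum_mul]
      exact Finset.sum_congr rfl fun i _ => by ring
    rw [e, hs x, one_mul]
  linarith

lemma sum_lap_tension (x : D) :
    ∑ i : Fin 3, lap (fun y => u y i) x * tension u x i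
      = ∑ i : Fin 3, (tension u x i)^2 := by
  have hl : ∀ i : Fin 3, lap (fun y => u y i) x
      = tension u x i - u x i * gradSq u x := by
    intro i; unfold tension; ring
  simp only [hl, sub_mul]
  rw [Finset.sum_sub_distrib]
  have e : ∑ i : Fin 3, u x i * gradSq u x * tension u x i
      = gradSq u x * ∑ i : Fin 3, u x i * tension u x i := by
    rw [Finset.mul_sum]
    exact Finset.sum_congr rfl fun i _ => by ring
  rw [e, sum_u_tension hu hs x, mul_zero, sub_zero]
  exact Finset.sum_congr rfl fun i _ => (sq (tension u x i)) ▸ by ring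

end U

/-- Local energy dissipation estimate: for a cutoff `η` supported in `B(x₀,ρ)` with
`|∇η|_{L^∞} ≤ C/ρ` and a sphere-valued `u` with tension `τ = Δu + u|∇u|²`,
`⟨η²∇u, ∇τ⟩_{L²} ≤ (C'/ρ²)|∇u|²_{L²}` with `C'` depending only on `C`. -/
theorem local_dissipation (C : ℝ) (hC : 0 < C) :
    ∃ C' > (0:ℝ), ∀ (ρ : ℝ), 0 < ρ → ∀ (x₀ : D) (η : D → ℝ) (u : D → Fin 3 → ℝ),
      ContDiff ℝ (⊤ : ℕ∞) η → PeriodicT η →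
      (∀ x ∈ Torus, x ∉ Metric.ball x₀ ρ → η x = 0) →
      (∀ x : D, Real.sqrt (∑ j : Fin 2, (pd j η x) ^ 2) ≤ C / ρ) →
      ContDiff ℝ (⊤ : ℕ∞) u → PeriodicT u →
      (∀ x : D, ∑ i : Fin 3, (u x i) ^ 2 = 1) →
      (∫ x in Torus, ∑ j : Fin 2, ∑ i : Fin 3,
          (η x) ^ 2 * pd j (fun y => u y i) x * pd j (fun y => tension u y i) x) ≤
        (C' / ρ ^ 2) * ∫ x in Torus, gradSq u x := by
  refine ⟨2 * C ^ 2, by positivity, ?_⟩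
  intro ρ hρ x₀ η u hη hηp _hsupp hηgrad hu hup hs
  -- basic smoothness facts
  have hη2 : (fun y => η y ^ 2) = fun y => η y * η y := by funext y; ring
  have hη2smooth : ContDiff ℝ (⊤ : ℕ∞) (fun y => η y ^ 2) := hη.pow 2
  have hpdu : ∀ (j : Fin 2) (i : Fin 3), ContDiff ℝ (⊤ : ℕ∞) (pd j (fun y => u y i)) :=
    fun j i => pd_contDiff (ui_contDiff hu i) j
  have hτ : ∀ i : Fin 3, ContDiff ℝ (⊤ : ℕ∞) (fun y => tension u y i) := tension_contDiff hu
  -- the functions to which we apply integration by parts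
  set P : Fin 2 → Fin 3 → D → ℝ :=
    fun j i x => η x ^ 2 * pd j (fun y => u y i) x * tension u x i with hP
  have hPsmooth : ∀ j i, ContDiff ℝ (⊤ : ℕ∞) (P j i) :=
    fun j i => (hη2smooth.mul (hpdu j i)).mul (hτ i)
  have hPper : ∀ j i, PeriodicT (P j i) := by
    intro j i x k
    show η (x + fun i => (k i:ℝ)) ^ 2 * _ * _ = _
    rw [hηp x k, (ui_per hup i).pd_per (ui_contDiff hu i) j x k,
      show tension u (x + fun i => (k i:ℝ)) i = tension u x i from tension_per hu hup i x k]
  -- expansion of the derivative of P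
  have hexp : ∀ (j : Fin 2) (i : Fin 3) (x : D),
      pd j (P j i) x =
        (2 * η x * pd j η x * pd j (fun y => u y i) x * tension u x i
          + η x ^ 2 * pd j (pd j (fun y => u y i)) x * tension u x i)
        + η x ^ 2 * pd j (fun y => u y i) x * pd j (fun y => tension u y i) x := by
    intro j i x
    have e1 : P j i = fun y => (η y ^ 2 * pd j (fun y' => u y' i) y) * tension u y i := rfl
    rw [e1, pd_mul (hη2smooth.mul (hpdu j i)) (hτ i),
      pd_mul hη2smooth (hpdu j i)]
    have e2 : pd j (fun y => η y ^ 2) x = 2 * η x * pd j η x := by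
      rw [hη2, pd_mul hη hη]; ring
    rw [e2]
    ring
  -- integration by parts: the integral of the total derivative vanishes
  have hIBP : (∫ x in Torus, ∑ j : Fin 2, ∑ i : Fin 3, pd j (P j i) x) = 0 := by
    rw [integral_finset_sum _ (fun j _ => integrable_finset_sum _ (fun i _ =>
      ((pd_contDiff (hPsmooth j i) j).continuous.continuousOn.integrableOn_compact
        isCompact_Icc)))]
    refine Finset.sum_eq_zero fun j _ => ?_
    rw [integral_finset_sum _ (fun i _ =>
      ((pd_contDiff (hPsmooth j i) j).continuous.continuousOn.integrableOn_compact
        isCompact_Icc))]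
    exact Finset.sum_eq_zero fun i _ => integral_pd_eq_zero (hPsmooth j i) (hPper j i) j
  -- the two integrands
  set G : D → ℝ := fun x => ∑ j : Fin 2, ∑ i : Fin 3,
      η x ^ 2 * pd j (fun y => u y i) x * pd j (fun y => tension u y i) x with hG
  set B : D → ℝ := fun x => ∑ j : Fin 2, ∑ i : Fin 3,
      (2 * η x * pd j η x * pd j (fun y => u y i) x * tension u x i
        + η x ^ 2 * pd j (pd j (fun y => u y i)) x * tension u x i) with hB
  have hsplit : ∀ x, ∑ j : Fin 2, ∑ i : Fin 3, pd j (P j i) x = B x + G x := by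
    intro x
    simp only [hexp, hG, hB, Finset.sum_add_distrib]
  have hGcont : Continuous G := by
    refine continuous_finset_sum _ fun j _ => continuous_finset_sum _ fun i _ => ?_
    exact (hη2smooth.continuous.mul (hpdu j i).continuous).mul
      (pd_contDiff (hτ i) j).continuous
  have hBcont : Continuous B := by
    refine continuous_finset_sum _ fun j _ => continuous_finset_sum _ fun i _ => ?_
    refine Continuous.add ?_ ?_
    · exact ((((continuous_const.mul hη.continuous).mul
        (pd_contDiff hη j).continuous).mul (hpdu j i).continuous).mul (hτ i).continuous)
    · exact ((hη2smooth.continuous.mul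
        (pd_contDiff (hpdu j i) j).continuous).mul (hτ i).continuous)
  have hGint : IntegrableOn G Torus :=
    hGcont.continuousOn.integrableOn_compact isCompact_Icc
  have hBint : IntegrableOn B Torus :=
    hBcont.continuousOn.integrableOn_compact isCompact_Icc
  have hEq : ∫ x in Torus, G x = - ∫ x in Torus, B x := by
    have h1 : ∫ x in Torus, (B x + G x) = 0 := by
      rw [← hIBP]
      exact setIntegral_congr_fun measurableSet_Icc (fun x _ => (hsplit x).symm)
    rw [integral_add hBint hGint] at h1
    linarith
  -- pointwise gradient bound on η
  have hηd : ∀ (j : Fin 2) (x : D), (pd j η x)^2 ≤ (C/ρ)^2 := by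
    intro j x
    have h1 : (0:ℝ) ≤ ∑ j' : Fin 2, (pd j' η x)^2 :=
      Finset.sum_nonneg fun _ _ => sq_nonneg _
    have h4 : Real.sqrt (∑ j' : Fin 2, (pd j' η x)^2) ^ 2 ≤ (C/ρ)^2 :=
      pow_le_pow_left₀ (Real.sqrt_nonneg _) (hηgrad x) 2
    rw [Real.sq_sqrt h1] at h4
    exact le_trans (Finset.single_le_sum (fun j' _ => sq_nonneg (pd j' η x))
      (Finset.mem_univ j)) h4
  -- pointwise bound:  -B ≤ (2C²/ρ²)|∇u|²
  have hpt : ∀ x, -B x ≤ (2*C^2/ρ^2) * gradSq u x := by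
    intro x
    have hterm : ∀ (j : Fin 2) (i : Fin 3),
        -(2 * η x * pd j η x * pd j (fun y => u y i) x * tension u x i
            + η x ^ 2 * pd j (pd j (fun y => u y i)) x * tension u x i)
          ≤ ((1/2) * η x^2 * (tension u x i)^2
              + 2*(C/ρ)^2 * (pd j (fun y => u y i) x)^2)
            - η x ^ 2 * pd j (pd j (fun y => u y i)) x * tension u x i := by
      intro j i
      have h2 := mul_le_mul_of_nonneg_right (hηd j x)
        (sq_nonneg (pd j (fun y => u y i) x))
      nlinarith [sq_nonneg (η x * tension u x i
        + 2 * pd j η x * pd j (fun y => u y i) x)]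
    have hsum := Finset.sum_le_sum (s := (Finset.univ : Finset (Fin 2)))
      (fun j _ => Finset.sum_le_sum (s := (Finset.univ : Finset (Fin 3)))
        (fun i _ => hterm j i))
    have hB2 : ∑ j : Fin 2, ∑ i : Fin 3,
        η x ^2 * pd j (pd j (fun y => u y i)) x * tension u x i
        = η x^2 * ∑ i : Fin 3, (tension u x i)^2 := by
      rw [Finset.sum_comm, ← sum_lap_tension hu hs x, Finset.mul_sum]
      refine Finset.sum_congr rfl fun i _ => ?_
      unfold lap
      rw [Finset.sum_mul, Finset.mul_sum]
      exact Finset.sum_congr rfl fun j _ => by ring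
    have p1 : ∑ j : Fin 2, ∑ i : Fin 3, ((1:ℝ)/2) * η x^2 * (tension u x i)^2
        = η x^2 * ∑ i : Fin 3, (tension u x i)^2 := by
      rw [Fin.sum_univ_two, ← Finset.sum_add_distrib, Finset.mul_sum]
      exact Finset.sum_congr rfl fun i _ => by ring
    have p2 : ∑ j : Fin 2, ∑ i : Fin 3, 2*(C/ρ)^2 * (pd j (fun y => u y i) x)^2
        = (2*C^2/ρ^2) * gradSq u x := by
      unfold gradSq
      rw [Finset.mul_sum]
      refine Finset.sum_congr rfl fun j _ => ?_
      rw [Finset.mul_sum]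
      refine Finset.sum_congr rfl fun i _ => ?_
      rw [div_pow]
      ring
    have hL : -B x ≤ ∑ j : Fin 2, ∑ i : Fin 3,
        (((1/2) * η x^2 * (tension u x i)^2
            + 2*(C/ρ)^2 * (pd j (fun y => u y i) x)^2)
          - η x ^ 2 * pd j (pd j (fun y => u y i)) x * tension u x i) := by
      rw [hB]
      simp only [← Finset.sum_neg_distrib]
      exact hsum
    simp only [sub_eq_add_neg, Finset.sum_add_distrib, Finset.sum_neg_distrib] at hL
    rw [p1, p2, hB2] at hL
    linarith
  -- conclusion by monotonicity of the integral
  have hgint : IntegrableOn (gradSq u) Torus :=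
    (gradSq_contDiff hu).continuous.continuousOn.integrableOn_compact isCompact_Icc
  have hmono : ∫ x in Torus, (-B) x ≤ ∫ x in Torus, (2*C^2/ρ^2) * gradSq u x := by
    refine setIntegral_mono_on (hBint.neg) (hgint.const_mul _) measurableSet_Icc ?_
    intro x _
    exact hpt x
  rw [integral_const_mul] at hmono
  rw [hEq, ← integral_neg]
  exact hmono
end
end
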